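/- Let α ∈ (0,1), z₀ ∈ (0,1), z_{i+1} = (1-α) z_i, and let F : [0,1] → [0,1) on [0,1) satisfy F(0)=0 and have a finite derivative at 0. Then for any integer k ≥ 2, the infinite product ∏_{i=0}^∞ (1 - F(z_i^{k-1}))^k converges to a strictly positive limit. -/

import Mathlib

/-!
Writing `a i = F (z i ^ (k - 1))`, the product is `(∏ (1 - a i)) ^ k`. Since `z i = (1 - α) ^ i z₀`,
the sequence `z i ^ (k - 1)` is geometric, and `F (x) = O(x)` at `0` makes `a` summable. Each factor
`1 - a i` is positive, and `log (1 + x) = O(x)` makes `∑ log (1 - a i)` converge, so the partial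
products converge to its exponential, which is positive.
-/

open Filter Topology Asymptotics

theorem eq_pow_mul_of_succ_eq_mul {M : Type*} [Monoid M] {r : M} {z : ℕ → M}
    (h : ∀ i, z (i + 1) = r * z i) (i : ℕ) : z i = r ^ i * z 0 := by
  induction i with
  | zero => rw [pow_zero, one_mul]
  | succ i ih => rw [h, ih, pow_succ', mul_assoc]

theorem HasDerivAt.summable_comp {E : Type*} [NormedAddCommGroup E] [NormedSpace ℝ E]
    [CompleteSpace E] {f : ℝ → E} {f' : E} (hf : HasDerivAt f f' 0) (h0 : f 0 = 0)
    {ι : Type*} {u : ι → ℝ} (hu : Summable u) : Summable (f ∘ u) := by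
  have hO : f =O[𝓝 0] id := by simpa [h0, Function.id_def] using hf.isBigO_sub
  exact hO.comp_summable hu

theorem Real.exists_pos_hasProd_one_sub {ι : Type*} {a : ι → ℝ} (ha : ∀ i, a i < 1)
    (hs : Summable a) : ∃ L, 0 < L ∧ HasProd (fun i ↦ 1 - a i) L := by
  have hlog : Summable fun i ↦ Real.log (1 - a i) := by
    simpa only [← sub_eq_add_neg] using Real.summable_log_one_add_of_summable hs.neg
  exact ⟨_, Real.exp_pos _, Real.hasProd_of_hasSum_log (fun i ↦ sub_pos.2 (ha i)) hlog.hasSum⟩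

theorem infinite_product_positive
    (α : ℝ) (hα : α ∈ Set.Ioo (0:ℝ) 1)
    (z₀ : ℝ) (hz₀ : z₀ ∈ Set.Ioo (0:ℝ) 1)
    (z : ℕ → ℝ) (hz0 : z 0 = z₀) (hzrec : ∀ i, z (i + 1) = (1 - α) * z i)
    (F : ℝ → ℝ) (hFmap : ∀ x ∈ Set.Ico (0:ℝ) 1, F x ∈ Set.Ico (0:ℝ) 1)
    (hF0 : F 0 = 0) (c : ℝ) (hFderiv : HasDerivAt F c 0)
    (k : ℕ) (hk : 2 ≤ k) :
    ∃ L : ℝ, 0 < L ∧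
      Filter.Tendsto (fun n => ∏ i ∈ Finset.range n, (1 - F ((z i) ^ (k - 1))) ^ k)
        Filter.atTop (nhds L) := by
  obtain ⟨hα0, hα1⟩ := hα
  obtain ⟨hz₀0, hz₀1⟩ := hz₀
  have hβ0 : 0 ≤ 1 - α := by linarith
  have hβ1 : 1 - α < 1 := by linarith
  have hz : ∀ i, z i = (1 - α) ^ i * z₀ := fun i ↦ hz0 ▸ eq_pow_mul_of_succ_eq_mul hzrec i
  have hmem : ∀ i, z i ^ (k - 1) ∈ Set.Ico (0:ℝ) 1 := fun i ↦ by
    have hzi0 : 0 ≤ z i := hz i ▸ mul_nonneg (pow_nonneg hβ0 i) hz₀0.le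
    have hzi1 : z i < 1 :=
      hz i ▸ (mul_le_of_le_one_left hz₀0.le (pow_le_one₀ hβ0 hβ1.le)).trans_lt hz₀1
    exact ⟨pow_nonneg hzi0 _, pow_lt_one₀ hzi0 hzi1 (by omega)⟩
  have hsum : Summable fun i ↦ z i ^ (k - 1) := by
    simp_rw [hz, mul_pow, ← pow_mul, mul_comm _ (k - 1), pow_mul]
    exact (summable_geometric_of_lt_one (pow_nonneg hβ0 _)
      (pow_lt_one₀ hβ0 hβ1 (by omega))).mul_right _
  obtain ⟨L, hL, hprod⟩ := Real.exists_pos_hasProd_one_sub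
    (fun i ↦ (hFmap _ (hmem i)).2) (hFderiv.summable_comp hF0 hsum)
  refine ⟨L ^ k, pow_pos hL k, ?_⟩
  simpa only [Finset.prod_pow] using hprod.tendsto_prod_nat.pow k
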